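/- For each integer n ≥ 7 there exists a K_3-divisible graph G of order n with |E(G)| = C(n,2) − e(n) that has no K_3-decomposition, where C(n,2) = n(n−1)/2 and e(n) = (3n−9)/2 if n ≡ 1 or 3 (mod 6), e(n) = (3n−7)/2 if n ≡ 5 (mod 6), e(n) = n + 2 if n ≡ 2 or 4 (mod 6), and e(n) = n if n ≡ 0 (mod 6). -/

import Mathlib

/-- A graph is `K_k`-divisible if `k(k-1)/2` divides its number of edges and `k-1`
divides every vertex degree. -/
def KkDivisible {V : Type*} (k : ℕ) (G : SimpleGraph V) : Prop :=
  (k * (k - 1) / 2) ∣ G.edgeSet.ncard ∧ ∀ x : V, (k - 1) ∣ (G.neighborSet x).ncard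

/-- A `K_k`-decomposition of `G`: a set of `k`-cliques of `G` (i.e. subgraphs
isomorphic to `K_k`) such that every edge of `G` lies in exactly one of them. -/
def HasKkDecomposition {V : Type*} (k : ℕ) (G : SimpleGraph V) : Prop :=
  ∃ D : Set (Finset V),
    (∀ A ∈ D, A.card = k ∧ ∀ x ∈ A, ∀ y ∈ A, x ≠ y → G.Adj x y) ∧
    (∀ x y : V, G.Adj x y → ∃! A, A ∈ D ∧ x ∈ A ∧ y ∈ A)

/-- The extremal bound `e(n)` from Corollary 1.4. -/
def eBound (n : ℕ) : ℚ :=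
  if n % 6 = 1 ∨ n % 6 = 3 then (3 * (n : ℚ) - 9) / 2
  else if n % 6 = 5 then (3 * (n : ℚ) - 7) / 2
  else if n % 6 = 0 then (n : ℚ)
  else (n : ℚ) + 2

/-!
Each graph is the complement `Lᶜ` of a sparse "leave" `L` with `e(n)` edges. In `L`, vertex `0`
is adjacent to all but four vertices, three of which span a triangle (for `n ≡ 0 mod 6`: all but
six, four of which span a `K₄`); the remaining edges of `L` adjust the degree parities and the
edge count. So in `Lᶜ` the neighbourhood of `0` contains an independent set larger than the rest
of the neighbourhood. In a triangle decomposition, however, the triangles through `0` pair each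
neighbour of `0` with an adjacent neighbour, which injects the independent set into the rest.

The leaves are defined once as graphs on `ℕ` and restricted to `Fin n` along `Fin.val`.
-/

open Finset SimpleGraph

theorem Nat.choose_two_mod_three (n : ℕ) : n.choose 2 % 3 = if n % 3 = 2 then 1 else 0 := by
  induction n with
  | zero => rfl
  | succ n ih =>
    have h : (n + 1).choose 2 = n.choose 1 + n.choose 2 := Nat.choose_succ_succ' n 1
    rw [h, Nat.choose_one_right]
    split_ifs at ih ⊢ <;> omega

theorem Finset.exists_ne_ne_of_card_eq_three {α : Type*} [DecidableEq α] {A : Finset α}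
    (hA : #A = 3) (x y : α) : ∃ t ∈ A, t ≠ x ∧ t ≠ y := by
  have h₁ := pred_card_le_card_erase (s := A) (a := x)
  have h₂ := pred_card_le_card_erase (s := A.erase x) (a := y)
  obtain ⟨t, ht⟩ := card_pos.1 (by omega : 0 < #((A.erase x).erase y))
  simp only [mem_erase] at ht
  exact ⟨t, ht.2.2, ht.2.1, ht.1⟩

theorem Finset.eq_of_card_eq_three {α : Type*} {A : Finset α} (hA : #A = 3) {x y z t : α}
    (hx : x ∈ A) (hy : y ∈ A) (hz : z ∈ A) (ht : t ∈ A)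
    (hxy : x ≠ y) (hxz : x ≠ z) (hxt : x ≠ t) (hyt : y ≠ t) (hzt : z ≠ t) : y = z := by
  classical
  obtain ⟨a, b, c, hab, hac, hbc, rfl⟩ := card_eq_three.1 hA
  simp only [mem_insert, mem_singleton] at hx hy hz ht
  grind

/-- The third vertex of the triangle through `x` and `y` maps `I` injectively into `S`. -/
theorem HasKkDecomposition.card_le_card {V : Type*} {G : SimpleGraph V}
    (hG : HasKkDecomposition 3 G) {x : V} {I S : Finset V} (hIx : ∀ y ∈ I, G.Adj x y)
    (hI : G.IsIndepSet I) (hIS : ∀ y, G.Adj x y → y ∈ I ∨ y ∈ S) : #I ≤ #S := by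
  classical
  obtain ⟨D, hD, hcover⟩ := hG
  have third : ∀ y ∈ I, ∃ t A, A ∈ D ∧ x ∈ A ∧ y ∈ A ∧ t ∈ A ∧ t ≠ x ∧ t ≠ y := by
    intro y hy
    obtain ⟨A, ⟨hA, hxA, hyA⟩, -⟩ := hcover x y (hIx y hy)
    obtain ⟨t, htA, htx, hty⟩ := exists_ne_ne_of_card_eq_three (hD A hA).1 x y
    exact ⟨t, A, hA, hxA, hyA, htA, htx, hty⟩
  choose! t A hA hxA hyA htA htx hty using third
  have hxt : ∀ y ∈ I, G.Adj x (t y) := fun y hy =>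
    (hD _ (hA y hy)).2 x (hxA y hy) _ (htA y hy) (htx y hy).symm
  refine card_le_card_of_injOn t (fun y hy => ?_) (fun y hy z hz htyz => ?_)
  · have hyt : G.Adj y (t y) := (hD _ (hA y hy)).2 y (hyA y hy) _ (htA y hy) (hty y hy).symm
    exact (hIS _ (hxt y hy)).resolve_left fun h => hI hy h (hty y hy).symm hyt
  · have hAyz : A y = A z := (hcover x (t y) (hxt y hy)).unique
      ⟨hA y hy, hxA y hy, htA y hy⟩ ⟨hA z hz, hxA z hz, htyz ▸ htA z hz⟩
    exact eq_of_card_eq_three (hD _ (hA y hy)).1 (hxA y hy) (hyA y hy) (hAyz ▸ hyA z hz)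
      (htA y hy) (hIx y hy).ne (hIx z hz).ne (htx y hy).symm (hty y hy).symm
      (htyz ▸ (hty z hz).symm)

theorem kkDivisible_three_iff {V : Type*} [Fintype V] (G : SimpleGraph V) [DecidableRel G.Adj] :
    KkDivisible 3 G ↔ 3 ∣ #G.edgeFinset ∧ ∀ v, 2 ∣ G.degree v := by
  simp only [KkDivisible, ← coe_edgeFinset, ← coe_neighborFinset, Set.ncard_coe_finset,
    card_neighborFinset_eq_degree]

theorem SimpleGraph.card_edgeFinset_compl {V : Type*} [Fintype V] [DecidableEq V]
    (G : SimpleGraph V) [DecidableRel G.Adj] :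
    #Gᶜ.edgeFinset = (Fintype.card V).choose 2 - #G.edgeFinset := by
  have h : Gᶜ.edgeFinset = (⊤ : SimpleGraph V).edgeFinset \ G.edgeFinset := by
    rw [← edgeFinset_sdiff]
    exact edgeFinset_inj.2 (by simp)
  rw [← card_edgeFinset_top_eq_card_choose_two, h, card_sdiff_of_subset (edgeFinset_mono le_top)]

theorem nondecomposable_K3_extremal_of_leave {n : ℕ} (L : SimpleGraph (Fin n)) [DecidableRel L.Adj]
    (hdeg : ∀ x, 2 ∣ n - 1 - L.degree x) (hdvd : 3 ∣ n.choose 2 - #L.edgeFinset)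
    (hcard : (#L.edgeFinset : ℚ) = eBound n) (hL : ¬ HasKkDecomposition 3 Lᶜ) :
    ∃ G : SimpleGraph (Fin n), KkDivisible 3 G ∧
      ((G.edgeSet.ncard : ℚ) = (n : ℚ) * ((n : ℚ) - 1) / 2 - eBound n) ∧
      ¬ HasKkDecomposition 3 G := by
  have hcompl := card_edgeFinset_compl L
  rw [Fintype.card_fin] at hcompl
  refine ⟨Lᶜ, (kkDivisible_three_iff _).2 ⟨hcompl ▸ hdvd, fun x => ?_⟩, ?_, hL⟩
  · simpa [degree_compl] using hdeg x
  · rw [← coe_edgeFinset, Set.ncard_coe_finset, hcompl,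
      Nat.cast_sub (card_edgeFinset_le_card_choose_two.trans_eq (by simp)), Nat.cast_choose_two,
      hcard]

theorem SimpleGraph.degree_comap_val_eq_card {n i : ℕ} (hi : i < n) {L : SimpleGraph ℕ}
    [DecidableRel L.Adj] {s : Finset ℕ} (hs : ∀ j, L.Adj i j ∧ j < n ↔ j ∈ s) :
    (L.comap ((↑) : Fin n → ℕ)).degree ⟨i, hi⟩ = #s := by
  rw [← card_neighborFinset_eq_degree]
  refine card_nbij' Fin.val (fun j => if h : j < n then ⟨j, h⟩ else ⟨i, hi⟩) ?_ ?_ ?_ ?_ <;>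
    intro j hj <;> simp_all [← hs]

theorem SimpleGraph.two_mul_card_edgeFinset_comap_val {L : SimpleGraph ℕ} [DecidableRel L.Adj]
    {n a c : ℕ} {f : ℕ → ℕ} (hdeg : ∀ x : Fin n, (L.comap ((↑) : Fin n → ℕ)).degree x = f x)
    (ha : a ≤ n) (hc : ∀ i, a ≤ i → f i = c) :
    2 * #(L.comap ((↑) : Fin n → ℕ)).edgeFinset = ∑ i ∈ range a, f i + (n - a) * c := by
  rw [← sum_degrees_eq_twice_card_edges, sum_congr rfl fun x _ => hdeg x,
    Fin.sum_univ_eq_sum_range f n, ← sum_range_add_sum_Ico _ ha,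
    sum_congr rfl fun i hi => hc i (mem_Ico.1 hi).1, sum_const, Nat.card_Ico, smul_eq_mul]

theorem SimpleGraph.not_hasKkDecomposition_compl_comap_val {L : SimpleGraph ℕ} {n : ℕ}
    (x : Fin n) (I S : Finset ℕ) (hIn : ∀ i ∈ I, i < n) (hSn : ∀ i ∈ S, i < n)
    (hIx : ∀ i ∈ I, i ≠ x ∧ ¬ L.Adj x i) (hI : ∀ i ∈ I, ∀ j ∈ I, i ≠ j → L.Adj i j)
    (hIS : ∀ j < n, j ≠ x → ¬ L.Adj x j → j ∈ I ∨ j ∈ S) (hlt : #S < #I) :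
    ¬ HasKkDecomposition 3 (L.comap ((↑) : Fin n → ℕ))ᶜ := by
  intro hG
  have := hG.card_le_card (x := x) (I := I.attachFin hIn) (S := S.attachFin hSn)
    (fun y hy => ?_) (fun y hy z hz hyz => ?_) (fun y hy => ?_)
  · simp only [card_attachFin] at this
    omega
  · rw [mem_attachFin] at hy
    exact (compl_adj _ _ _).2 ⟨fun h => (hIx y hy).1 (congrArg Fin.val h).symm, (hIx y hy).2⟩
  · rw [mem_coe, mem_attachFin] at hy hz
    exact fun h => h.2 (hI y hy z hz (Fin.val_injective.ne hyz))
  · rw [compl_adj] at hy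
    simpa [mem_attachFin] using hIS y y.isLt (fun h => hy.1 (Fin.ext h.symm)) hy.2

def leave13 : SimpleGraph ℕ :=
  fromRel fun i j => (i = 0 ∧ 5 ≤ j) ∨ (1 ≤ i ∧ i < j ∧ j ≤ 3) ∨ (5 ≤ i ∧ i % 2 = 1 ∧ j = i + 1)

instance : DecidableRel leave13.Adj := inferInstanceAs (DecidableRel (fromRel _).Adj)

theorem leave13_degree {n : ℕ} (hn : 5 ≤ n) (hodd : n % 2 = 1) (x : Fin n) :
    (leave13.comap ((↑) : Fin n → ℕ)).degree x =
      if x.val = 0 then n - 5 else if x.val = 4 then 0 else 2 := by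
  obtain ⟨i, hi⟩ := x
  dsimp only
  rcases (by omega : i = 0 ∨ (1 ≤ i ∧ i ≤ 3) ∨ i = 4 ∨ (5 ≤ i ∧ i % 2 = 1) ∨ (6 ≤ i ∧ i % 2 = 0))
    with rfl | h | rfl | h | h
  · rw [degree_comap_val_eq_card hi (s := Ico 5 n) (by grind [leave13, fromRel_adj])]; simp
  · rw [degree_comap_val_eq_card hi (s := ({1, 2, 3} : Finset ℕ).erase i)
      (by grind [leave13, fromRel_adj]), card_erase_of_mem (by grind), if_neg (by omega),
      if_neg (by omega)]
    rfl
  · rw [degree_comap_val_eq_card hi (s := ∅) (by grind [leave13, fromRel_adj])]; simp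
  · rw [degree_comap_val_eq_card hi (s := {0, i + 1}) (by grind [leave13, fromRel_adj]),
      card_pair (by omega), if_neg (by omega), if_neg (by omega)]
  · rw [degree_comap_val_eq_card hi (s := {0, i - 1}) (by grind [leave13, fromRel_adj]),
      card_pair (by omega), if_neg (by omega), if_neg (by omega)]

theorem two_mul_card_edgeFinset_leave13 {n : ℕ} (hn : 5 ≤ n) (hodd : n % 2 = 1) :
    2 * #(leave13.comap ((↑) : Fin n → ℕ)).edgeFinset + 9 = 3 * n := by
  have := two_mul_card_edgeFinset_comap_val
    (f := fun i => if i = 0 then n - 5 else if i = 4 then 0 else 2)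
    (leave13_degree hn hodd) hn (c := 2) (fun i hi => by rw [if_neg (by omega), if_neg (by omega)])
  simp only [sum_range_succ, sum_range_zero, reduceIte, Nat.reduceEqDiff] at this
  omega

theorem nondecomposable_K3_extremal_of_mod_six_eq_one_or_three {n : ℕ} (hn : 7 ≤ n)
    (h : n % 6 = 1 ∨ n % 6 = 3) :
    ∃ G : SimpleGraph (Fin n), KkDivisible 3 G ∧
      ((G.edgeSet.ncard : ℚ) = (n : ℚ) * ((n : ℚ) - 1) / 2 - eBound n) ∧
      ¬ HasKkDecomposition 3 G := by
  have hodd : n % 2 = 1 := by omega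
  have hcard := two_mul_card_edgeFinset_leave13 (by omega : 5 ≤ n) hodd
  refine nondecomposable_K3_extremal_of_leave (leave13.comap ((↑) : Fin n → ℕ))
    (fun x => ?_) ?_ ?_ ?_
  · rw [leave13_degree (by omega) hodd]; split_ifs <;> omega
  · have := Nat.choose_two_mod_three n; split_ifs at this <;> omega
  · rw [eBound, if_pos h]
    have := (Nat.cast_inj (R := ℚ)).2 hcard
    push_cast at this
    linarith
  · exact not_hasKkDecomposition_compl_comap_val ⟨0, by omega⟩ {1, 2, 3} {4} (by grind)
      (by grind) (by simp [leave13]) (by simp [leave13]) (by grind [leave13, fromRel_adj])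
      (by simp)

def leave5 : SimpleGraph ℕ :=
  fromRel fun i j => (i = 0 ∧ 5 ≤ j) ∨ (1 ≤ i ∧ i < j ∧ j ≤ 3) ∨ (i = 4 ∧ (j = 5 ∨ j = 6)) ∨
    (7 ≤ i ∧ i % 2 = 1 ∧ j = i + 1)

instance : DecidableRel leave5.Adj := inferInstanceAs (DecidableRel (fromRel _).Adj)

theorem leave5_degree {n : ℕ} (hn : 7 ≤ n) (hodd : n % 2 = 1) (x : Fin n) :
    (leave5.comap ((↑) : Fin n → ℕ)).degree x = if x.val = 0 then n - 5 else 2 := by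
  obtain ⟨i, hi⟩ := x
  dsimp only
  rcases (by omega : i = 0 ∨ (1 ≤ i ∧ i ≤ 3) ∨ i = 4 ∨ (5 ≤ i ∧ i ≤ 6) ∨ (7 ≤ i ∧ i % 2 = 1) ∨
    (8 ≤ i ∧ i % 2 = 0)) with rfl | h | rfl | h | h | h
  · rw [degree_comap_val_eq_card hi (s := Ico 5 n) (by grind [leave5, fromRel_adj])]; simp
  · rw [degree_comap_val_eq_card hi (s := ({1, 2, 3} : Finset ℕ).erase i)
      (by grind [leave5, fromRel_adj]), card_erase_of_mem (by grind), if_neg (by omega)]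
    rfl
  · rw [degree_comap_val_eq_card hi (s := {5, 6}) (by grind [leave5, fromRel_adj])]; simp
  · rw [degree_comap_val_eq_card hi (s := {0, 4}) (by grind [leave5, fromRel_adj]),
      card_pair (by omega), if_neg (by omega)]
  · rw [degree_comap_val_eq_card hi (s := {0, i + 1}) (by grind [leave5, fromRel_adj]),
      card_pair (by omega), if_neg (by omega)]
  · rw [degree_comap_val_eq_card hi (s := {0, i - 1}) (by grind [leave5, fromRel_adj]),
      card_pair (by omega), if_neg (by omega)]

theorem two_mul_card_edgeFinset_leave5 {n : ℕ} (hn : 7 ≤ n) (hodd : n % 2 = 1) :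
    2 * #(leave5.comap ((↑) : Fin n → ℕ)).edgeFinset + 7 = 3 * n := by
  have := two_mul_card_edgeFinset_comap_val (f := fun i => if i = 0 then n - 5 else 2)
    (leave5_degree hn hodd) (by omega : 1 ≤ n) (c := 2) (fun i hi => by rw [if_neg (by omega)])
  simp only [sum_range_one, reduceIte] at this
  omega

theorem nondecomposable_K3_extremal_of_mod_six_eq_five {n : ℕ} (hn : 7 ≤ n) (h : n % 6 = 5) :
    ∃ G : SimpleGraph (Fin n), KkDivisible 3 G ∧
      ((G.edgeSet.ncard : ℚ) = (n : ℚ) * ((n : ℚ) - 1) / 2 - eBound n) ∧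
      ¬ HasKkDecomposition 3 G := by
  have hodd : n % 2 = 1 := by omega
  have hcard := two_mul_card_edgeFinset_leave5 hn hodd
  refine nondecomposable_K3_extremal_of_leave (leave5.comap ((↑) : Fin n → ℕ))
    (fun x => ?_) ?_ ?_ ?_
  · rw [leave5_degree hn hodd]; split_ifs <;> omega
  · have := Nat.choose_two_mod_three n; split_ifs at this <;> omega
  · rw [eBound, if_neg (by omega), if_pos h]
    have := (Nat.cast_inj (R := ℚ)).2 hcard
    push_cast at this
    linarith
  · exact not_hasKkDecomposition_compl_comap_val ⟨0, by omega⟩ {1, 2, 3} {4} (by grind)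
      (by grind) (by simp [leave5]) (by simp [leave5]) (by grind [leave5, fromRel_adj])
      (by simp)

def leave24 : SimpleGraph ℕ :=
  fromRel fun i j => (i = 0 ∧ 5 ≤ j) ∨ (1 ≤ i ∧ i < j ∧ j ≤ 3) ∨ (1 ≤ i ∧ i ≤ 2 ∧ j = 5) ∨
    (3 ≤ i ∧ i ≤ 4 ∧ j = 6)

instance : DecidableRel leave24.Adj := inferInstanceAs (DecidableRel (fromRel _).Adj)

theorem leave24_degree {n : ℕ} (hn : 7 ≤ n) (x : Fin n) :
    (leave24.comap ((↑) : Fin n → ℕ)).degree x =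
      if x.val = 0 then n - 5 else if x.val = 4 then 1 else if x.val ≤ 6 then 3 else 1 := by
  obtain ⟨i, hi⟩ := x
  dsimp only
  rcases (by omega : i = 0 ∨ i = 1 ∨ i = 2 ∨ i = 3 ∨ i = 4 ∨ i = 5 ∨ i = 6 ∨ 7 ≤ i)
    with rfl | rfl | rfl | rfl | rfl | rfl | rfl | h
  · rw [degree_comap_val_eq_card hi (s := Ico 5 n) (by grind [leave24, fromRel_adj])]; simp
  · rw [degree_comap_val_eq_card hi (s := {2, 3, 5}) (by grind [leave24, fromRel_adj])]; simp
  · rw [degree_comap_val_eq_card hi (s := {1, 3, 5}) (by grind [leave24, fromRel_adj])]; simp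
  · rw [degree_comap_val_eq_card hi (s := {1, 2, 6}) (by grind [leave24, fromRel_adj])]; simp
  · rw [degree_comap_val_eq_card hi (s := {6}) (by grind [leave24, fromRel_adj])]; simp
  · rw [degree_comap_val_eq_card hi (s := {0, 1, 2}) (by grind [leave24, fromRel_adj])]; simp
  · rw [degree_comap_val_eq_card hi (s := {0, 3, 4}) (by grind [leave24, fromRel_adj])]; simp
  · rw [degree_comap_val_eq_card hi (s := {0}) (by grind [leave24, fromRel_adj]), card_singleton,
      if_neg (by omega), if_neg (by omega), if_neg (by omega)]

theorem card_edgeFinset_leave24 {n : ℕ} (hn : 7 ≤ n) :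
    #(leave24.comap ((↑) : Fin n → ℕ)).edgeFinset = n + 2 := by
  have := two_mul_card_edgeFinset_comap_val
    (f := fun i => if i = 0 then n - 5 else if i = 4 then 1 else if i ≤ 6 then 3 else 1)
    (leave24_degree hn) hn (c := 1)
    (fun i hi => by rw [if_neg (by omega), if_neg (by omega), if_neg (by omega)])
  simp only [sum_range_succ, sum_range_zero, reduceIte, Nat.reduceEqDiff, Nat.reduceLeDiff] at this
  omega

theorem nondecomposable_K3_extremal_of_mod_six_eq_two_or_four {n : ℕ} (hn : 7 ≤ n)
    (h : n % 6 = 2 ∨ n % 6 = 4) :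
    ∃ G : SimpleGraph (Fin n), KkDivisible 3 G ∧
      ((G.edgeSet.ncard : ℚ) = (n : ℚ) * ((n : ℚ) - 1) / 2 - eBound n) ∧
      ¬ HasKkDecomposition 3 G := by
  have hcard := card_edgeFinset_leave24 hn
  refine nondecomposable_K3_extremal_of_leave (leave24.comap ((↑) : Fin n → ℕ))
    (fun x => ?_) ?_ ?_ ?_
  · rw [leave24_degree hn]; split_ifs <;> omega
  · have := Nat.choose_two_mod_three n; split_ifs at this <;> omega
  · rw [eBound, if_neg (by omega), if_neg (by omega), if_neg (by omega), hcard]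
    push_cast
    ring
  · exact not_hasKkDecomposition_compl_comap_val ⟨0, by omega⟩ {1, 2, 3} {4} (by grind)
      (by grind) (by simp [leave24]) (by simp [leave24]) (by grind [leave24, fromRel_adj])
      (by simp)

def leave0 : SimpleGraph ℕ :=
  fromRel fun i j => (i = 0 ∧ 7 ≤ j) ∨ (1 ≤ i ∧ i < j ∧ j ≤ 4) ∨ (i = 5 ∧ j = 6)

instance : DecidableRel leave0.Adj := inferInstanceAs (DecidableRel (fromRel _).Adj)

theorem leave0_degree {n : ℕ} (hn : 7 ≤ n) (x : Fin n) :
    (leave0.comap ((↑) : Fin n → ℕ)).degree x =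
      if x.val = 0 then n - 7 else if x.val ≤ 4 then 3 else 1 := by
  obtain ⟨i, hi⟩ := x
  dsimp only
  rcases (by omega : i = 0 ∨ (1 ≤ i ∧ i ≤ 4) ∨ i = 5 ∨ i = 6 ∨ 7 ≤ i)
    with rfl | h | rfl | rfl | h
  · rw [degree_comap_val_eq_card hi (s := Ico 7 n) (by grind [leave0, fromRel_adj])]; simp
  · rw [degree_comap_val_eq_card hi (s := ({1, 2, 3, 4} : Finset ℕ).erase i)
      (by grind [leave0, fromRel_adj]), card_erase_of_mem (by grind), if_neg (by omega),
      if_pos (by omega)]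
    rfl
  · rw [degree_comap_val_eq_card hi (s := {6}) (by grind [leave0, fromRel_adj])]; simp
  · rw [degree_comap_val_eq_card hi (s := {5}) (by grind [leave0, fromRel_adj])]; simp
  · rw [degree_comap_val_eq_card hi (s := {0}) (by grind [leave0, fromRel_adj]), card_singleton,
      if_neg (by omega), if_neg (by omega)]

theorem card_edgeFinset_leave0 {n : ℕ} (hn : 7 ≤ n) :
    #(leave0.comap ((↑) : Fin n → ℕ)).edgeFinset = n := by
  have := two_mul_card_edgeFinset_comap_val
    (f := fun i => if i = 0 then n - 7 else if i ≤ 4 then 3 else 1)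
    (leave0_degree hn) (by omega : 5 ≤ n) (c := 1)
    (fun i hi => by rw [if_neg (by omega), if_neg (by omega)])
  simp only [sum_range_succ, sum_range_zero, reduceIte, Nat.reduceEqDiff, Nat.reduceLeDiff] at this
  omega

theorem nondecomposable_K3_extremal_of_mod_six_eq_zero {n : ℕ} (hn : 7 ≤ n) (h : n % 6 = 0) :
    ∃ G : SimpleGraph (Fin n), KkDivisible 3 G ∧
      ((G.edgeSet.ncard : ℚ) = (n : ℚ) * ((n : ℚ) - 1) / 2 - eBound n) ∧
      ¬ HasKkDecomposition 3 G := by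
  have hcard := card_edgeFinset_leave0 hn
  refine nondecomposable_K3_extremal_of_leave (leave0.comap ((↑) : Fin n → ℕ))
    (fun x => ?_) ?_ ?_ ?_
  · rw [leave0_degree hn]; split_ifs <;> omega
  · have := Nat.choose_two_mod_three n; split_ifs at this <;> omega
  · rw [eBound, if_neg (by omega), if_neg (by omega), if_pos h, hcard]
  · exact not_hasKkDecomposition_compl_comap_val ⟨0, by omega⟩ {1, 2, 3, 4} {5, 6}
      (by grind) (by grind) (by simp [leave0]) (by simp [leave0])
      (by grind [leave0, fromRel_adj]) (by simp)

/-- For each `n ≥ 7` there is a `K_3`-divisible graph of order `n` with exactly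
`C(n,2) - e(n)` edges that has no `K_3`-decomposition. -/
theorem nondecomposable_K3_extremal (n : ℕ) (hn : 7 ≤ n) :
    ∃ G : SimpleGraph (Fin n), KkDivisible 3 G ∧
      ((G.edgeSet.ncard : ℚ) = (n : ℚ) * ((n : ℚ) - 1) / 2 - eBound n) ∧
      ¬ HasKkDecomposition 3 G := by
  rcases (by omega : n % 6 = 0 ∨ (n % 6 = 1 ∨ n % 6 = 3) ∨ (n % 6 = 2 ∨ n % 6 = 4) ∨ n % 6 = 5)
    with h | h | h | h
  · exact nondecomposable_K3_extremal_of_mod_six_eq_zero hn h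
  · exact nondecomposable_K3_extremal_of_mod_six_eq_one_or_three hn h
  · exact nondecomposable_K3_extremal_of_mod_six_eq_two_or_four hn h
  · exact nondecomposable_K3_extremal_of_mod_six_eq_five hn h
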